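/- Functoriality: fix a constant N₀ ∈ ℕ and define, for each unital vector space v, the vertex algebra V(v) := F(v)/I(v) with constant locality function N ≡ N₀. Let φ : v → v′ be a linear map of unital vector spaces with φ(1) = 1, and let Φ : F(v) → F(v′) be the induced map determined by Φ(u) = φ(u) for u ∈ v and Φ(xₙy) = Φ(x)ₙΦ(y). Then Φ(I(v)) ⊆ I(v′), so Φ descends to a vertex algebra morphism V(φ) : V(v) → V(v′) (a linear map sending 1 to 1 and satisfying V(φ)(xₙy) = V(φ)(x)ₙV(φ)(y)); moreover V(id_v) = id_{V(v)} and V(φ ∘ ψ) = V(φ) ∘ V(ψ) for composable morphisms ψ, φ of unital vector spaces. -/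

import Mathlib

noncomputable section

/-!
Common framework: "infinite free algebras" in the sense of Eller, *Chiral vector bundles*.

An infinite free algebra (completed) is modelled as a topological vector space `F`
over a field `k` of characteristic zero, with a distinguished vector `one` and a
`ℤ`-indexed family of bilinear products `circ n`.  The formal infinite sums provided
by the completion are interpreted by `tsum` (`∑'`).  An ideal is a subspace closed
under all the products (on both sides) and under convergent (formal) infinite sums.
-/

/-- An infinite free algebra (completed). -/
structure IFA (k F : Type) [Field k] [CharZero k] [AddCommGroup F] [Module k F]
    [TopologicalSpace F] where
  /-- the distinguished vector `1` -/
  one : F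
  /-- the products `∘ₙ`; `circ n x y` is `x ∘ₙ y` -/
  circ : ℤ → F → F → F
  circ_add_left : ∀ (n : ℤ) (x x' y : F), circ n (x + x') y = circ n x y + circ n x' y
  circ_add_right : ∀ (n : ℤ) (x y y' : F), circ n x (y + y') = circ n x y + circ n x y'
  circ_smul_left : ∀ (n : ℤ) (c : k) (x y : F), circ n (c • x) y = c • circ n x y
  circ_smul_right : ∀ (n : ℤ) (c : k) (x y : F), circ n x (c • y) = c • circ n x y

namespace IFA

/-- The binomial coefficient `C(m, K)` for `m : ℤ`, `K : ℕ`, as an element of `k`. -/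
def zbinom (k : Type) [Field k] [CharZero k] (m : ℤ) (K : ℕ) : k :=
  (∏ i ∈ Finset.range K, ((m : k) - (i : k))) / (K.factorial : k)

variable {k F : Type} [Field k] [CharZero k] [AddCommGroup F] [Module k F]
  [TopologicalSpace F] (A : IFA k F)

/-- `D x := x ∘₋₂ 1`. -/
def D (x : F) : F := A.circ (-2) x A.one

/-- identity generators `i⟦x;n⟧ := 1ₙx − δ_{n,−1}x` -/
def geni (x : F) (n : ℤ) : F := A.circ n A.one x - (if n = -1 then x else 0)

/-- derivation generators `d⟦x,y;n⟧ := D(xₙy) − (Dx)ₙy − xₙ(Dy)` -/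
def gend (x y : F) (n : ℤ) : F :=
  A.D (A.circ n x y) - A.circ n (A.D x) y - A.circ n x (A.D y)

/-- shift generators `e⟦x,y;n⟧ := (Dx)ₙy + n·x_{n−1}y` -/
def gene (x y : F) (n : ℤ) : F := A.circ n (A.D x) y + (n : k) • A.circ (n - 1) x y

/-- quasi-commutativity generators
`qc⟦x,y;n⟧ := xₙy + Σ_{K≥0}((−1)^{n+K}/K!)·D^K(y_{n+K}x)` -/
def genqc (x y : F) (n : ℤ) : F :=
  A.circ n x y +
    ∑' K : ℕ, (((-1 : k) ^ (n + (K : ℤ))) * ((K.factorial : k)⁻¹)) •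
      (A.D)^[K] (A.circ (n + (K : ℤ)) y x)

/-- quasi-associativity generators
`qa⟦x,y,z;m,n⟧ := (x_my)_nz − Σ_{K≥0} C(m,K)(−1)^K (x_{m−K}(y_{n+K}z) − (−1)^m y_{m+n−K}(x_Kz))` -/
def genqa (x y z : F) (m n : ℤ) : F :=
  A.circ n (A.circ m x y) z -
    ∑' K : ℕ, ((zbinom k m K) * ((-1 : k) ^ K)) •
      (A.circ (m - (K : ℤ)) x (A.circ (n + (K : ℤ)) y z)
        - ((-1 : k) ^ m) • A.circ (m + n - (K : ℤ)) y (A.circ (K : ℤ) x z))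

/-- An ideal of the (completed) infinite free algebra: a subspace closed under all the
products `∘ₙ` by arbitrary elements on both sides, and under the formal (convergent)
infinite sums provided by the completion. -/
def IsIdeal (J : Submodule k F) : Prop :=
  (∀ (n : ℤ) (x y : F), y ∈ J → A.circ n x y ∈ J ∧ A.circ n y x ∈ J) ∧
    (∀ f : ℕ → F, (∀ i, f i ∈ J) → Summable f → (∑' i, f i) ∈ J)

/-- The ideal generated by a set `S ⊆ F`. -/
def idealGenBy (S : Set F) : Submodule k F := sInf {J | A.IsIdeal J ∧ S ⊆ J}

/-- The generators of the vertex algebra ideal other than the locality generators: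
`i⟦x;n⟧, d⟦x,y;n⟧, qc⟦x,y;n⟧` for `n = −1` and all `n ≥ 0`; `qa⟦x,y,z;m,n⟧` for
`m, n ∈ {−1,0,1,2,…}`; and `e⟦x,y;n⟧` for all `n ∈ ℤ`. -/
def baseGens : Set F :=
  {w | ∃ (x : F) (n : ℤ), -1 ≤ n ∧ w = A.geni x n} ∪
  {w | ∃ (x y : F) (n : ℤ), -1 ≤ n ∧ w = A.gend x y n} ∪
  {w | ∃ (x y : F) (n : ℤ), -1 ≤ n ∧ w = A.genqc x y n} ∪
  {w | ∃ (x y z : F) (m n : ℤ), -1 ≤ m ∧ -1 ≤ n ∧ w = A.genqa x y z m n} ∪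
  {w | ∃ (x y : F) (n : ℤ), w = A.gene x y n}

/-- The vertex algebra ideal `I` associated to the locality function `N : F × F → ℕ`:
the ideal generated by the base generators together with the locality elements
`xₙy` for all `x, y ∈ F` and `n ≥ N(x,y)`. -/
def vertexIdeal (N : F → F → ℕ) : Submodule k F :=
  A.idealGenBy
    (A.baseGens ∪ {w | ∃ (x y : F) (n : ℤ), (N x y : ℤ) ≤ n ∧ w = A.circ n x y})

end IFA
/-!
Concrete construction of the (completed) infinite free algebra `F(v)` generated by a
unital vector space `v`: product shapes are binary trees with integer-labelled internal
nodes; the span of the monomials of a fixed shape is the corresponding iterated tensor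
power of `v`; and the completion (allowing formal infinite sums of monomials of pairwise
distinct product shapes) is the direct product over all shapes.  Each shape component
carries the discrete topology and `F(v)` the product topology, so that a family is
summable exactly when every shape component receives only finitely many contributions.
-/

/-- Product shapes: full binary rooted trees with an integer at each internal node. -/
inductive Shape : Type
  | leaf : Shape
  | node : ℤ → Shape → Shape → Shape
  deriving DecidableEq

/-- A bundled `k`-vector space. -/
structure MC (k : Type) [Field k] where
  T : Type
  [grp : AddCommGroup T]
  [mod : Module k T]

attribute [instance] MC.grp MC.mod

variable (k : Type) [Field k] [CharZero k] (V : Type) [AddCommGroup V] [Module k V]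

/-- The space spanned by the monomials of a given product shape (bundled). -/
def monData : Shape → MC k
  | .leaf => MC.mk V
  | .node _ l r => MC.mk (TensorProduct k (monData l).T (monData r).T)

/-- The space spanned by the monomials of a given product shape. -/
abbrev MonSp (s : Shape) : Type := (monData k V s).T

instance (s : Shape) : TopologicalSpace (MonSp k V s) := ⊥

/-- The completed infinite free algebra `F(v)` on the (unital) vector space `v = V`. -/
abbrev FV : Type := ∀ s : Shape, MonSp k V s

/-- The embedding of the generating space `v` into `F(v)` (the length-1 component). -/
def ι (a : V) : FV k V := fun s =>
  match s with
  | .leaf => a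
  | .node _ _ _ => 0

/-- The product `x ∘ₙ y` on `F(v)`. -/
def op (n : ℤ) (x y : FV k V) : FV k V := fun s =>
  match s with
  | .leaf => 0
  | .node m l r => if n = m then TensorProduct.tmul k (x l) (y r) else 0

/-- `F(v)` as an infinite free algebra, with distinguished vector the image of the
distinguished vector `e ∈ v`. -/
def freeIFA (e : V) : IFA k (FV k V) where
  one := ι k V e
  circ := op k V
  circ_add_left := by
    intro n x x' y; funext s
    cases s with
    | leaf => simp [op]
    | node m l r =>
        by_cases h : n = m <;>
          (simp [op, h, Pi.add_apply, TensorProduct.add_tmul]; try rfl)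
  circ_add_right := by
    intro n x y y'; funext s
    cases s with
    | leaf => simp [op]
    | node m l r =>
        by_cases h : n = m <;>
          (simp [op, h, Pi.add_apply, TensorProduct.tmul_add]; try rfl)
  circ_smul_left := by
    intro n c x y; funext s
    cases s with
    | leaf => simp [op]
    | node m l r =>
        by_cases h : n = m
        · simp only [op, h, Pi.smul_apply]
          exact (TensorProduct.smul_tmul' c (x l) (y r)).symm
        · simp [op, h]
  circ_smul_right := by
    intro n c x y; funext s
    cases s with
    | leaf => simp [op]
    | node m l r =>
        by_cases h : n = m <;>
          (simp [op, h, Pi.smul_apply, TensorProduct.tmul_smul]; try rfl)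

/-- The vertex algebra ideal `I(v)` of `F(v)`: generated by the base generators
together with the locality elements `uₙv` for `u, v ∈ v` (the generating space) and
`n ≥ N(u,v)`. -/
def genVertexIdeal (e : V) (N : V → V → ℕ) : Submodule k (FV k V) :=
  (freeIFA k V e).idealGenBy
    ((freeIFA k V e).baseGens ∪
      {w | ∃ (a b : V) (n : ℤ), (N a b : ℤ) ≤ n ∧ w = op k V n (ι k V a) (ι k V b)})
/-- The shape-component of the map `F(v) → F(v′)` induced by a linear map `φ : v → v′`
(functoriality of tensor powers). -/
def monMap {k : Type} [Field k] [CharZero k]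
    {V W : Type} [AddCommGroup V] [Module k V] [AddCommGroup W] [Module k W]
    (φ : V →ₗ[k] W) : ∀ s : Shape, MonSp k V s →ₗ[k] MonSp k W s
  | .leaf => φ
  | .node _ l r => TensorProduct.map (monMap φ l) (monMap φ r)

/-- The map `Φ : F(v) → F(v′)` induced by a linear map `φ : v → v′`; it is determined
by `Φ(u) = φ(u)` for `u ∈ v` and `Φ(xₙy) = Φ(x)ₙΦ(y)`. -/
def FVmap {k : Type} [Field k] [CharZero k]
    {V W : Type} [AddCommGroup V] [Module k V] [AddCommGroup W] [Module k W]
    (φ : V →ₗ[k] W) (x : FV k V) : FV k W := fun s => monMap φ s (x s)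
/-!
`Φ = FVmap φ` is continuous and linear, sends `1` to `1` and commutes with every product `∘ₙ`,
hence with `D`. The generators of `I(v)` are built from products, `1` and `D`, together with the
infinite sums in `qc` and `qa`; these series are summable in `F(v)` (in each shape component
only finitely many terms are nonzero), so `Φ` passes through them and maps generators to
generators. Thus `Φ⁻¹(I(v′))` is an ideal containing the generators of `I(v)`, so it contains
`I(v)`. Functoriality is that of tensor products, shape by shape.
-/

namespace IFA

variable {k F G : Type} [Field k] [CharZero k] [AddCommGroup F] [Module k F] [TopologicalSpace F]
  [AddCommGroup G] [Module k G] [TopologicalSpace G]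

section Ideals

variable (A : IFA k F)

theorem subset_idealGenBy (S : Set F) : S ⊆ A.idealGenBy S := fun _ hx =>
  Submodule.mem_sInf.2 fun _ hJ => hJ.2 hx

theorem idealGenBy_le {S : Set F} {J : Submodule k F} (hJ : A.IsIdeal J) (hS : S ⊆ J) :
    A.idealGenBy S ≤ J :=
  sInf_le ⟨hJ, hS⟩

theorem isIdeal_idealGenBy (S : Set F) : A.IsIdeal (A.idealGenBy S) := by
  refine ⟨fun n x y hy => ⟨?_, ?_⟩, fun f hf hs => ?_⟩ <;>
    refine Submodule.mem_sInf.2 fun J hJ => ?_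
  · exact (hJ.1.1 n x y (Submodule.mem_sInf.1 hy J hJ)).1
  · exact (hJ.1.1 n x y (Submodule.mem_sInf.1 hy J hJ)).2
  · exact hJ.1.2 f (fun i => Submodule.mem_sInf.1 (hf i) J hJ) hs

end Ideals

section Series

variable (A : IFA k F)

def qcTerm (x y : F) (n : ℤ) (K : ℕ) : F :=
  (((-1 : k) ^ (n + (K : ℤ))) * ((K.factorial : k)⁻¹)) •
    (A.D)^[K] (A.circ (n + (K : ℤ)) y x)

def qaTerm (x y z : F) (m n : ℤ) (K : ℕ) : F :=
  ((zbinom k m K) * ((-1 : k) ^ K)) •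
    (A.circ (m - (K : ℤ)) x (A.circ (n + (K : ℤ)) y z)
      - ((-1 : k) ^ m) • A.circ (m + n - (K : ℤ)) y (A.circ (K : ℤ) x z))

theorem genqc_eq (x y : F) (n : ℤ) :
    A.genqc x y n = A.circ n x y + ∑' K, A.qcTerm x y n K := rfl

theorem genqa_eq (x y z : F) (m n : ℤ) :
    A.genqa x y z m n = A.circ n (A.circ m x y) z - ∑' K, A.qaTerm x y z m n K := rfl

end Series

structure Hom (A : IFA k F) (B : IFA k G) where
  toCLM : F →L[k] G
  map_one : toCLM A.one = B.one
  map_circ : ∀ n x y, toCLM (A.circ n x y) = B.circ n (toCLM x) (toCLM y)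

namespace Hom

variable {A : IFA k F} {B : IFA k G} (f : A.Hom B)

theorem map_D (x : F) : f.toCLM (A.D x) = B.D (f.toCLM x) := by
  simp only [IFA.D, f.map_circ, f.map_one]

theorem map_iterate_D (K : ℕ) (x : F) : f.toCLM (A.D^[K] x) = B.D^[K] (f.toCLM x) :=
  Function.Semiconj.iterate_right f.map_D K x

theorem map_geni (x : F) (n : ℤ) : f.toCLM (A.geni x n) = B.geni (f.toCLM x) n := by
  simp only [IFA.geni, map_sub, f.map_circ, f.map_one]
  split_ifs <;> simp

theorem map_gend (x y : F) (n : ℤ) :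
    f.toCLM (A.gend x y n) = B.gend (f.toCLM x) (f.toCLM y) n := by
  simp only [IFA.gend, map_sub, f.map_circ, f.map_D]

theorem map_gene (x y : F) (n : ℤ) :
    f.toCLM (A.gene x y n) = B.gene (f.toCLM x) (f.toCLM y) n := by
  simp only [IFA.gene, map_add, map_smul, f.map_circ, f.map_D]

theorem map_qcTerm (x y : F) (n : ℤ) (K : ℕ) :
    f.toCLM (A.qcTerm x y n K) = B.qcTerm (f.toCLM x) (f.toCLM y) n K := by
  simp only [qcTerm, map_smul, f.map_iterate_D, f.map_circ]

theorem map_qaTerm (x y z : F) (m n : ℤ) (K : ℕ) :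
    f.toCLM (A.qaTerm x y z m n K) = B.qaTerm (f.toCLM x) (f.toCLM y) (f.toCLM z) m n K := by
  simp only [qaTerm, map_smul, map_sub, f.map_circ]

variable [T2Space G]

theorem map_genqc {x y : F} {n : ℤ} (hs : Summable (A.qcTerm x y n)) :
    f.toCLM (A.genqc x y n) = B.genqc (f.toCLM x) (f.toCLM y) n := by
  rw [genqc_eq, genqc_eq, map_add, f.toCLM.map_tsum hs, f.map_circ]
  simp only [f.map_qcTerm]

theorem map_genqa {x y z : F} {m n : ℤ} (hs : Summable (A.qaTerm x y z m n)) :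
    f.toCLM (A.genqa x y z m n) = B.genqa (f.toCLM x) (f.toCLM y) (f.toCLM z) m n := by
  rw [genqa_eq, genqa_eq, map_sub, f.toCLM.map_tsum hs, f.map_circ, f.map_circ]
  simp only [f.map_qaTerm]

theorem mapsTo_baseGens (hqc : ∀ x y n, Summable (A.qcTerm x y n))
    (hqa : ∀ x y z m n, Summable (A.qaTerm x y z m n)) :
    Set.MapsTo f.toCLM A.baseGens B.baseGens := by
  rintro _ ((((⟨x, n, hn, rfl⟩ | ⟨x, y, n, hn, rfl⟩) | ⟨x, y, n, hn, rfl⟩) |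
    ⟨x, y, z, m, n, hm, hn, rfl⟩) | ⟨x, y, n, rfl⟩)
  · exact Or.inl (Or.inl (Or.inl (Or.inl ⟨_, n, hn, f.map_geni x n⟩)))
  · exact Or.inl (Or.inl (Or.inl (Or.inr ⟨_, _, n, hn, f.map_gend x y n⟩)))
  · exact Or.inl (Or.inl (Or.inr ⟨_, _, n, hn, f.map_genqc (hqc x y n)⟩))
  · exact Or.inl (Or.inr ⟨_, _, _, m, n, hm, hn, f.map_genqa (hqa x y z m n)⟩)
  · exact Or.inr ⟨_, _, n, f.map_gene x y n⟩

end Hom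

theorem IsIdeal.comap [T2Space G] {A : IFA k F} {B : IFA k G} (f : A.Hom B) {J : Submodule k G}
    (hJ : B.IsIdeal J) : A.IsIdeal (J.comap (f.toCLM : F →ₗ[k] G)) := by
  refine ⟨fun n x y hy => ?_, fun g hg hs => ?_⟩
  · simp only [Submodule.mem_comap, ContinuousLinearMap.coe_coe, f.map_circ] at hy ⊢
    exact hJ.1 n _ _ hy
  · rw [Submodule.mem_comap, ContinuousLinearMap.coe_coe, f.toCLM.map_tsum hs]
    exact hJ.2 _ hg (hs.mapL f.toCLM)

end IFA

theorem Pi.summable_of_forall_finset_support {ι β : Type*} {M : β → Type*}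
    [∀ b, AddCommMonoid (M b)] [∀ b, TopologicalSpace (M b)] {f : ι → ∀ b, M b}
    (h : ∀ b, ∃ T : Finset ι, ∀ i ∉ T, f i b = 0) : Summable f :=
  Pi.summable.2 fun b => (h b).elim fun _ hT => summable_of_ne_finset_zero hT

def Shape.height : Shape → ℕ
  | .leaf => 0
  | .node _ l r => max l.height r.height + 1

section FreeAlgebra

variable {k : Type} [Field k] {U V W : Type} [AddCommGroup U] [Module k U]
  [AddCommGroup V] [Module k V] [AddCommGroup W] [Module k W]

instance (s : Shape) : DiscreteTopology (MonSp k V s) := ⟨rfl⟩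

theorem op_apply_node_self (n : ℤ) (x y : FV k V) (l r : Shape) :
    op k V n x y (.node n l r) = x l ⊗ₜ[k] y r :=
  if_pos rfl

theorem op_apply_node_of_ne {n m : ℤ} (h : n ≠ m) (x y : FV k V) (l r : Shape) :
    op k V n x y (.node m l r) = 0 :=
  if_neg h

variable [CharZero k]

theorem iterate_D_apply_of_height_lt (e : V) (x : FV k V) {K : ℕ} {s : Shape}
    (hs : s.height < K) : ((freeIFA k V e).D^[K] x) s = 0 := by
  induction K generalizing s with
  | zero => exact absurd hs (Nat.not_lt_zero _)
  | succ K ih =>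
    rw [Function.iterate_succ_apply']
    cases s with
    | leaf => rfl
    | node m l r =>
      by_cases hm : (-2 : ℤ) = m
      · subst hm
        have hl : l.height < K := by simp only [Shape.height] at hs; omega
        change op k V (-2) _ (ι k V e) (.node (-2) l r) = 0
        rw [op_apply_node_self, ih hl, TensorProduct.zero_tmul]
        rfl
      · exact op_apply_node_of_ne hm _ _ l r

theorem summable_qcTerm (e : V) (x y : FV k V) (n : ℤ) :
    Summable ((freeIFA k V e).qcTerm x y n) :=
  Pi.summable_of_forall_finset_support fun s => ⟨Finset.range (s.height + 1), fun K hK => by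
    rw [IFA.qcTerm, Pi.smul_apply,
      iterate_D_apply_of_height_lt e _ (by simpa [Nat.lt_succ_iff] using hK), smul_zero]⟩

theorem summable_qaTerm (e : V) (x y z : FV k V) (m n : ℤ) :
    Summable ((freeIFA k V e).qaTerm x y z m n) := by
  refine Pi.summable_of_forall_finset_support fun s => ?_
  cases s with
  | leaf => exact ⟨∅, fun K _ => by simp [IFA.qaTerm, freeIFA, op]⟩
  | node p l r =>
    refine ⟨{(m - p).toNat, (m + n - p).toNat}, fun K hK => ?_⟩
    simp only [Finset.mem_insert, Finset.mem_singleton, not_or] at hK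
    have h₁ : m - (K : ℤ) ≠ p := by omega
    have h₂ : m + n - (K : ℤ) ≠ p := by omega
    simp only [IFA.qaTerm, Pi.smul_apply, Pi.sub_apply, freeIFA, op_apply_node_of_ne h₁,
      op_apply_node_of_ne h₂, smul_zero, sub_zero]

theorem continuous_FVmap (φ : V →ₗ[k] W) : Continuous (FVmap φ) :=
  continuous_pi fun s => continuous_of_discreteTopology.comp (continuous_apply s)

def FVmapL (φ : V →ₗ[k] W) : FV k V →L[k] FV k W where
  toFun := FVmap φ
  map_add' x y := funext fun s => map_add (monMap φ s) (x s) (y s)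
  map_smul' c x := funext fun s => map_smul (monMap φ s) c (x s)
  cont := continuous_FVmap φ

@[simp] theorem FVmapL_apply (φ : V →ₗ[k] W) (x : FV k V) : FVmapL φ x = FVmap φ x := rfl

theorem FVmap_ι (φ : V →ₗ[k] W) (a : V) : FVmap φ (ι k V a) = ι k W (φ a) := by
  funext s
  cases s with
  | leaf => rfl
  | node m l r => exact map_zero _

theorem FVmap_op (φ : V →ₗ[k] W) (n : ℤ) (x y : FV k V) :
    FVmap φ (op k V n x y) = op k W n (FVmap φ x) (FVmap φ y) := by
  funext s
  cases s with
  | leaf => exact map_zero _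
  | node m l r =>
    by_cases h : n = m
    · subst h
      simp only [FVmap, op_apply_node_self]
      exact TensorProduct.map_tmul _ _ _ _
    · simp only [FVmap, op_apply_node_of_ne h]
      exact map_zero _

def freeIFAHom (φ : V →ₗ[k] W) {e : V} {e' : W} (hφ : φ e = e') :
    (freeIFA k V e).Hom (freeIFA k W e') where
  toCLM := FVmapL φ
  map_one := by simp only [freeIFA, FVmapL_apply, FVmap_ι, hφ]
  map_circ := FVmap_op φ

theorem genVertexIdeal_le_comap (φ : V →ₗ[k] W) {e : V} {e' : W} (hφ : φ e = e')
    {N : V → V → ℕ} {N' : W → W → ℕ} (hN : ∀ a b, N' (φ a) (φ b) ≤ N a b) :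
    genVertexIdeal k V e N ≤
      (genVertexIdeal k W e' N').comap (FVmapL φ : FV k V →ₗ[k] FV k W) := by
  refine IFA.idealGenBy_le _ ((IFA.isIdeal_idealGenBy _ _).comap (freeIFAHom φ hφ)) ?_
  rintro _ (hw | ⟨a, b, n, hn, rfl⟩)
  · exact IFA.subset_idealGenBy _ _ <| Or.inl <|
      (freeIFAHom φ hφ).mapsTo_baseGens (summable_qcTerm e) (summable_qaTerm e) hw
  · refine IFA.subset_idealGenBy _ _ (Or.inr ⟨φ a, φ b, n, ?_, ?_⟩)
    · exact le_trans (by exact_mod_cast hN a b) hn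
    · simp only [ContinuousLinearMap.coe_coe, FVmapL_apply, FVmap_op, FVmap_ι]

theorem monMap_id (s : Shape) : monMap (LinearMap.id (R := k) (M := V)) s = LinearMap.id := by
  induction s with
  | leaf => rfl
  | node m l r ihl ihr => exact (congrArg₂ TensorProduct.map ihl ihr).trans TensorProduct.map_id

theorem monMap_comp (φ : V →ₗ[k] W) (ψ : U →ₗ[k] V) (s : Shape) :
    monMap (φ ∘ₗ ψ) s = monMap φ s ∘ₗ monMap ψ s := by
  induction s with
  | leaf => rfl
  | node m l r ihl ihr =>
    exact (congrArg₂ TensorProduct.map ihl ihr).trans (TensorProduct.map_comp _ _ _ _)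

theorem FVmap_id (x : FV k V) : FVmap (LinearMap.id (R := k) (M := V)) x = x :=
  funext fun s => by rw [FVmap, monMap_id, LinearMap.id_apply]

theorem FVmap_comp (φ : V →ₗ[k] W) (ψ : U →ₗ[k] V) (x : FV k U) :
    FVmap (φ ∘ₗ ψ) x = FVmap φ (FVmap ψ x) :=
  funext fun s => by rw [FVmap, monMap_comp, LinearMap.comp_apply]; rfl

end FreeAlgebra

theorem statement15_general (k : Type) [Field k] [CharZero k] (N₀ : ℕ)
    (V : Type) [AddCommGroup V] [Module k V] (e : V)
    (V' : Type) [AddCommGroup V'] [Module k V'] (e' : V')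
    (V'' : Type) [AddCommGroup V''] [Module k V'']
    (φ : V →ₗ[k] V') (hφ : φ e = e')
    (ψ : V'' →ₗ[k] V) :
    (∀ a : V, FVmap φ (ι k V a) = ι k V' (φ a)) ∧
    (FVmap φ (ι k V e) = ι k V' e') ∧
    (∀ (n : ℤ) (x y : FV k V),
      FVmap φ (op k V n x y) = op k V' n (FVmap φ x) (FVmap φ y)) ∧
    (∀ x ∈ genVertexIdeal k V e (fun _ _ => N₀),
      FVmap φ x ∈ genVertexIdeal k V' e' (fun _ _ => N₀)) ∧
    (∃ Φbar : (FV k V ⧸ genVertexIdeal k V e (fun _ _ => N₀)) →ₗ[k]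
        (FV k V' ⧸ genVertexIdeal k V' e' (fun _ _ => N₀)),
      ∀ x : FV k V,
        Φbar (Submodule.Quotient.mk x) = Submodule.Quotient.mk (FVmap φ x)) ∧
    (∀ x : FV k V, FVmap (LinearMap.id (R := k) (M := V)) x = x) ∧
    (∀ x : FV k V'', FVmap (φ.comp ψ) x = FVmap φ (FVmap ψ x)) := by
  have hI := genVertexIdeal_le_comap (N := fun _ _ => N₀) (N' := fun _ _ => N₀) φ hφ
    fun _ _ => le_rfl
  exact ⟨FVmap_ι φ, by rw [FVmap_ι, hφ], FVmap_op φ, fun _ hx => hI hx,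
    ⟨Submodule.mapQ _ _ (FVmapL φ : FV k V →ₗ[k] FV k V') hI, fun _ => rfl⟩,
    FVmap_id, FVmap_comp φ ψ⟩

/-- **functoriality.** Fix a constant `N₀` and set
`V(v) := F(v)/I(v)` with constant locality function `N ≡ N₀`.  For a morphism
`φ : v → v′` of unital vector spaces (`φ(1) = 1`), the induced map `Φ = FVmap φ`
satisfies `Φ(u) = φ(u)` on `v` and `Φ(xₙy) = Φ(x)ₙΦ(y)`; it maps `I(v)` into `I(v′)`
and hence descends to a vertex algebra morphism `V(φ) : V(v) → V(v′)` sending `1` to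
`1` and commuting with all products; moreover `V(id) = id` and `V(φ ∘ ψ) = V(φ) ∘ V(ψ)`
(already at the level of the induced maps). -/
theorem statement15 (k : Type) [Field k] [CharZero k] (N₀ : ℕ)
    (V : Type) [AddCommGroup V] [Module k V] (e : V) (he : e ≠ 0)
    (V' : Type) [AddCommGroup V'] [Module k V'] (e' : V') (he' : e' ≠ 0)
    (V'' : Type) [AddCommGroup V''] [Module k V''] (e'' : V'') (he'' : e'' ≠ 0)
    (φ : V →ₗ[k] V') (hφ : φ e = e')
    (ψ : V'' →ₗ[k] V) (hψ : ψ e'' = e) :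
    (∀ a : V, FVmap φ (ι k V a) = ι k V' (φ a)) ∧
    (FVmap φ (ι k V e) = ι k V' e') ∧
    (∀ (n : ℤ) (x y : FV k V),
      FVmap φ (op k V n x y) = op k V' n (FVmap φ x) (FVmap φ y)) ∧
    (∀ x ∈ genVertexIdeal k V e (fun _ _ => N₀),
      FVmap φ x ∈ genVertexIdeal k V' e' (fun _ _ => N₀)) ∧
    (∃ Φbar : (FV k V ⧸ genVertexIdeal k V e (fun _ _ => N₀)) →ₗ[k]
        (FV k V' ⧸ genVertexIdeal k V' e' (fun _ _ => N₀)),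
      ∀ x : FV k V,
        Φbar (Submodule.Quotient.mk x) = Submodule.Quotient.mk (FVmap φ x)) ∧
    (∀ x : FV k V, FVmap (LinearMap.id (R := k) (M := V)) x = x) ∧
    (∀ x : FV k V'', FVmap (φ.comp ψ) x = FVmap φ (FVmap ψ x)) :=
  statement15_general k N₀ V e V' e' V'' φ hφ ψ
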